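/- Let B be a Banach space and L_ω (ω ∈ Ω) bounded operators on B such that for some K' > 0 and λ > 0 the compositions satisfy ‖L_{σ^{n-1}ω} ∘ ⋯ ∘ L_ω f‖ ≤ K' e^{-λn} ‖f‖ for all f in a closed subspace B₀ invariant under each L_ω, all n ≥ 0, and a.e. ω. Let S be the Banach space of essentially bounded measurable maps X : Ω → B₀ with norm ‖X‖_∞ = ess sup_ω ‖X(ω)‖. Then the operator D : S → S defined by (DX)(ω) = L_{σ^{-1}ω} X(σ^{-1}ω) − X(ω) is a bijection, with inverse given by (D^{-1}X)(ω) = −Σ_{j=0}^∞ L_{σ^{-j}ω}^{(j)} X(σ^{-j}ω), where L_ω^{(j)} = L_{σ^{j-1}ω} ∘ ⋯ ∘ L_ω. -/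

import Mathlib

/-!
Unwinding the definitions, `D X = X'` says `X = L_{σ⁻¹ω} X(σ⁻¹ω) − X'(ω)`; iterating this
backwards along the orbit of `ω` gives the candidate inverse, whose series converges because its
`j`-th term is bounded by `K' e^{-λj} ‖X‖_∞`. Applying `D` to the series shifts it by one index,
so `D (D⁻¹ X) = X`; in the other direction the `j`-th term of `D⁻¹ (D X)` is the difference of
consecutive terms of the series for `X`, so the sum telescopes to `−X(ω)` as those terms tend to `0`.
-/

variable {Ω : Type*} {B : Type*} [NormedAddCommGroup B] [NormedSpace ℝ B]

/-- Operator compositions `L_ω^{(n)} = L_{σ^{n-1}ω} ∘ ⋯ ∘ L_ω`. -/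
noncomputable def Literate (σ : Ω → Ω) (L : Ω → B →L[ℝ] B) (ω : Ω) : ℕ → B →L[ℝ] B
  | 0 => ContinuousLinearMap.id ℝ B
  | n + 1 => (L (σ^[n] ω)).comp (Literate σ L ω n)

/-- The operator `(D X)(ω) = L_{σ^{-1}ω} X(σ^{-1}ω) − X(ω)`. -/
def Dop (σ : Equiv Ω Ω) (L : Ω → B →L[ℝ] B) (X : Ω → B) : Ω → B :=
  fun ω => L (σ.symm ω) (X (σ.symm ω)) - X ω

/-- The candidate inverse `(D⁻¹ X)(ω) = −∑_{j≥0} L^{(j)}_{σ^{-j}ω} X(σ^{-j}ω)`. -/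
noncomputable def Dinv (σ : Equiv Ω Ω) (L : Ω → B →L[ℝ] B) (X : Ω → B) : Ω → B :=
  fun ω => -∑' j : ℕ, Literate σ L ((σ.symm)^[j] ω) j (X ((σ.symm)^[j] ω))

lemma Literate_one_apply (σ : Ω → Ω) (L : Ω → B →L[ℝ] B) (ω : Ω) (b : B) :
    Literate σ L ω 1 b = L ω b := rfl

lemma Literate_succ_apply' (σ : Ω → Ω) (L : Ω → B →L[ℝ] B) (ω : Ω) (n : ℕ) (b : B) :
    Literate σ L ω (n + 1) b = Literate σ L (σ ω) n (L ω b) := by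
  induction n generalizing ω with
  | zero => rfl
  | succ n ih =>
    change L (σ^[n + 1] ω) (Literate σ L ω (n + 1) b) = L (σ^[n] (σ ω)) _
    rw [ih, Function.iterate_succ_apply]
    rfl

lemma Literate_mem (σ : Ω → Ω) (L : Ω → B →L[ℝ] B) {B₀ : Submodule ℝ B}
    (hinv : ∀ ω, ∀ b ∈ B₀, L ω b ∈ B₀) (ω : Ω) (n : ℕ) {b : B} (hb : b ∈ B₀) :
    Literate σ L ω n b ∈ B₀ := by
  induction n with
  | zero => exact hb
  | succ n ih => exact hinv _ _ ih

def boundedMaps (B₀ : Submodule ℝ B) : Set (Ω → B) :=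
  {X | (∀ ω, X ω ∈ B₀) ∧ ∃ C : ℝ, ∀ ω, ‖X ω‖ ≤ C}

namespace Dinv

variable (σ : Equiv Ω Ω) (L : Ω → B →L[ℝ] B)

noncomputable def term (X : Ω → B) (ω : Ω) (j : ℕ) : B :=
  Literate σ L (σ.symm^[j] ω) j (X (σ.symm^[j] ω))

lemma term_zero (X : Ω → B) (ω : Ω) : term σ L X ω 0 = X ω := rfl

lemma apply_eq_neg_tsum_term (X : Ω → B) (ω : Ω) :
    Dinv σ L X ω = -∑' j, term σ L X ω j := rfl

lemma L_term (X : Ω → B) (ω : Ω) (j : ℕ) :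
    L (σ.symm ω) (term σ L X (σ.symm ω) j) = term σ L X ω (j + 1) := by
  have hpre : σ.symm^[j + 1] ω = σ.symm^[j] (σ.symm ω) := Function.iterate_succ_apply _ _ _
  have horbit : σ^[j] (σ.symm^[j + 1] ω) = σ.symm ω := by
    rw [hpre]
    exact σ.right_inv.iterate j _
  change _ = L (σ^[j] (σ.symm^[j + 1] ω)) _
  rw [horbit, hpre]
  rfl

lemma term_Dop (X : Ω → B) (ω : Ω) (j : ℕ) :
    term σ L (Dop σ L X) ω j = term σ L X ω (j + 1) - term σ L X ω j := by
  have hpre : σ.symm^[j + 1] ω = σ.symm (σ.symm^[j] ω) := Function.iterate_succ_apply' _ _ _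
  rw [term, term, hpre, Literate_succ_apply', Equiv.apply_symm_apply]
  exact map_sub _ _ _

lemma norm_term_le {B₀ : Submodule ℝ B} {K' r C : ℝ} (hK' : 0 ≤ K') (hr : 0 ≤ r)
    (hdec : ∀ ω, ∀ n : ℕ, ∀ b ∈ B₀, ‖Literate σ L ω n b‖ ≤ K' * r ^ n * ‖b‖)
    {X : Ω → B} (hXB₀ : ∀ ω, X ω ∈ B₀) (hXC : ∀ ω, ‖X ω‖ ≤ C) (ω : Ω) (j : ℕ) :
    ‖term σ L X ω j‖ ≤ K' * C * r ^ j := by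
  calc ‖term σ L X ω j‖ ≤ K' * r ^ j * ‖X (σ.symm^[j] ω)‖ := hdec _ _ _ (hXB₀ _)
    _ ≤ K' * r ^ j * C := mul_le_mul_of_nonneg_left (hXC _) (by positivity)
    _ = K' * C * r ^ j := by ring

lemma summable_term [CompleteSpace B] {B₀ : Submodule ℝ B} {K' r : ℝ} (hK' : 0 ≤ K')
    (hr₀ : 0 ≤ r) (hr₁ : r < 1)
    (hdec : ∀ ω, ∀ n : ℕ, ∀ b ∈ B₀, ‖Literate σ L ω n b‖ ≤ K' * r ^ n * ‖b‖)
    {X : Ω → B} (hX : X ∈ boundedMaps B₀) (ω : Ω) : Summable (term σ L X ω) :=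
  let ⟨hXB₀, _, hXC⟩ := hX
  .of_norm_bounded ((summable_geometric_of_lt_one hr₀ hr₁).mul_left _)
    (norm_term_le σ L hK' hr₀ hdec hXB₀ hXC ω)

end Dinv

open Dinv

lemma Dop_Dinv (σ : Equiv Ω Ω) (L : Ω → B →L[ℝ] B) {X : Ω → B}
    (hX : ∀ ω, Summable (term σ L X ω)) : Dop σ L (Dinv σ L X) = X := by
  funext ω
  have hshift : L (σ.symm ω) (Dinv σ L X (σ.symm ω)) = -∑' j, term σ L X ω (j + 1) := by
    rw [apply_eq_neg_tsum_term, map_neg, (L _).map_tsum (hX _)]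
    simp only [L_term]
  rw [Dop, hshift, apply_eq_neg_tsum_term, (hX ω).tsum_eq_zero_add, term_zero]
  abel

lemma Dinv_Dop_apply (σ : Equiv Ω Ω) (L : Ω → B →L[ℝ] B) {X : Ω → B} {ω : Ω}
    (hDX : Summable (term σ L (Dop σ L X) ω))
    (hX : Filter.Tendsto (term σ L X ω) Filter.atTop (nhds 0)) :
    Dinv σ L (Dop σ L X) ω = X ω := by
  have htelescope : ∑' j, term σ L (Dop σ L X) ω j = -X ω := by
    refine tendsto_nhds_unique hDX.tendsto_sum_tsum_nat ?_
    simp only [term_Dop, Finset.sum_range_sub, term_zero]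
    simpa only [zero_sub] using hX.sub_const (X ω)
  rw [apply_eq_neg_tsum_term, htelescope, neg_neg]

lemma Dop_mapsTo_boundedMaps (σ : Equiv Ω Ω) (L : Ω → B →L[ℝ] B) {B₀ : Submodule ℝ B}
    (hinv : ∀ ω, ∀ b ∈ B₀, L ω b ∈ B₀) {M : ℝ} (hM : 0 ≤ M)
    (hL : ∀ ω, ∀ b ∈ B₀, ‖L ω b‖ ≤ M * ‖b‖) :
    Set.MapsTo (Dop σ L) (boundedMaps B₀) (boundedMaps B₀) := by
  rintro X ⟨hXB₀, C, hXC⟩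
  refine ⟨fun ω => sub_mem (hinv _ _ (hXB₀ _)) (hXB₀ _), M * C + C, fun ω => ?_⟩
  calc ‖Dop σ L X ω‖ ≤ ‖L (σ.symm ω) (X (σ.symm ω))‖ + ‖X ω‖ := norm_sub_le _ _
    _ ≤ M * ‖X (σ.symm ω)‖ + ‖X ω‖ := by gcongr; exact hL _ _ (hXB₀ _)
    _ ≤ M * C + C := by gcongr <;> exact hXC _

lemma Dinv_mapsTo_boundedMaps [CompleteSpace B] (σ : Equiv Ω Ω) (L : Ω → B →L[ℝ] B)
    {B₀ : Submodule ℝ B} (hB₀ : IsClosed (B₀ : Set B)) (hinv : ∀ ω, ∀ b ∈ B₀, L ω b ∈ B₀)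
    {K' r : ℝ} (hK' : 0 ≤ K') (hr₀ : 0 ≤ r) (hr₁ : r < 1)
    (hdec : ∀ ω, ∀ n : ℕ, ∀ b ∈ B₀, ‖Literate σ L ω n b‖ ≤ K' * r ^ n * ‖b‖) :
    Set.MapsTo (Dinv σ L) (boundedMaps B₀) (boundedMaps B₀) := by
  rintro X ⟨hXB₀, C, hXC⟩
  refine ⟨fun ω => neg_mem (tsum_mem hB₀ fun j => Literate_mem _ L hinv _ _ (hXB₀ _)),
    K' * C * (1 - r)⁻¹, fun ω => ?_⟩
  rw [apply_eq_neg_tsum_term, norm_neg]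
  exact tsum_of_norm_bounded ((hasSum_geometric_of_lt_one hr₀ hr₁).mul_left _)
    (norm_term_le σ L hK' hr₀ hdec hXB₀ hXC ω)

/-- If the cocycle generated by the `L_ω` contracts uniformly exponentially on an invariant
closed subspace `B₀`, then `D X(ω) = L_{σ^{-1}ω} X(σ^{-1}ω) − X(ω)` is a bijection of the
space of bounded `B₀`-valued maps, with inverse `Dinv`. -/
theorem Dop_bijective [CompleteSpace B]
    (σ : Equiv Ω Ω) (L : Ω → B →L[ℝ] B)
    (B₀ : Submodule ℝ B) (hB₀closed : IsClosed (B₀ : Set B))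
    (hinv : ∀ ω, ∀ b ∈ B₀, L ω b ∈ B₀)
    (K' lam : ℝ) (hK' : 0 < K') (hlam : 0 < lam)
    (hdec : ∀ ω, ∀ n : ℕ, ∀ b ∈ B₀,
      ‖Literate σ L ω n b‖ ≤ K' * Real.exp (-lam * n) * ‖b‖) :
    Set.BijOn (Dop σ L)
      {X : Ω → B | (∀ ω, X ω ∈ B₀) ∧ ∃ C : ℝ, ∀ ω, ‖X ω‖ ≤ C}
      {X : Ω → B | (∀ ω, X ω ∈ B₀) ∧ ∃ C : ℝ, ∀ ω, ‖X ω‖ ≤ C} ∧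
    ∀ X ∈ {X : Ω → B | (∀ ω, X ω ∈ B₀) ∧ ∃ C : ℝ, ∀ ω, ‖X ω‖ ≤ C},
      (Dinv σ L X ∈ {X : Ω → B | (∀ ω, X ω ∈ B₀) ∧ ∃ C : ℝ, ∀ ω, ‖X ω‖ ≤ C} ∧
        Dop σ L (Dinv σ L X) = X ∧ Dinv σ L (Dop σ L X) = X) := by
  have hr₀ : 0 ≤ Real.exp (-lam) := (Real.exp_pos _).le
  have hr₁ : Real.exp (-lam) < 1 := Real.exp_lt_one_iff.mpr (neg_neg_of_pos hlam)
  have hdec' : ∀ ω, ∀ n : ℕ, ∀ b ∈ B₀,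
      ‖Literate σ L ω n b‖ ≤ K' * Real.exp (-lam) ^ n * ‖b‖ := by
    intro ω n b hb
    rw [← Real.exp_nat_mul, mul_comm (n : ℝ)]
    exact hdec ω n b hb
  have hsum : ∀ X ∈ boundedMaps B₀, ∀ ω, Summable (term σ L X ω) :=
    fun X => summable_term σ L hK'.le hr₀ hr₁ hdec'
  have hDop : Set.MapsTo (Dop σ L) (boundedMaps B₀) (boundedMaps B₀) :=
    Dop_mapsTo_boundedMaps σ L hinv (M := K' * Real.exp (-lam)) (by positivity)
      fun ω b hb => by simpa only [Literate_one_apply, pow_one] using hdec' ω 1 b hb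
  have hDinv := Dinv_mapsTo_boundedMaps σ L hB₀closed hinv hK'.le hr₀ hr₁ hdec'
  have hright : Set.RightInvOn (Dinv σ L) (Dop σ L) (boundedMaps B₀) :=
    fun X hX => Dop_Dinv σ L (hsum X hX)
  have hleft : Set.LeftInvOn (Dinv σ L) (Dop σ L) (boundedMaps B₀) :=
    fun X hX => funext fun ω =>
      Dinv_Dop_apply σ L (hsum _ (hDop hX) ω) (hsum X hX ω).tendsto_atTop_zero
  exact ⟨Set.InvOn.bijOn ⟨hleft, hright⟩ hDop hDinv,
    fun X hX => ⟨hDinv hX, hright hX, hleft hX⟩⟩
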